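/- For every k ≥ 1, 2 ln 2 - 1 ≤ f(k) < 1/2, where f(k) = k^2 [ (1+1/k) ln(1+1/k) - 1/k ]. -/

import Mathlib

noncomputable def f (k : ℝ) : ℝ := k^2 * ((1 + 1/k) * Real.log (1 + 1/k) - 1/k)

/-!
For `k > 0`, `f k = k (k + 1) log (1 + 1/k) - k`, whose derivative is `(2k + 1) log (1 + 1/k) - 2`.
This is nonnegative because the first term of the series
`log (1 + 1/k) = 2 artanh (1 / (2k + 1))` is `2 / (2k + 1)`, so `f` is increasing and
`f k ≥ f 1 = 2 log 2 - 1`. The upper bound is `t < sinh t` at `t = log (1 + 1/k)`, since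
`sinh (log y) = (y - 1/y) / 2` turns it into exactly `f k < 1/2`.
-/

open Real Set

theorem log_lt_sub_inv_div_two {y : ℝ} (hy : 1 < y) : log y < (y - y⁻¹) / 2 := by
  rw [← sinh_log (by linarith)]
  exact self_lt_sinh_iff.2 (log_pos hy)

theorem two_div_le_log_one_add_inv {a : ℝ} (ha : 0 < a) : 2 / (2 * a + 1) ≤ log (1 + a⁻¹) := by
  simpa [div_eq_mul_inv] using le_hasSum (hasSum_log_one_add_inv ha) 0 fun n _ => by positivity

theorem f_eq_mul_log_one_add_inv {k : ℝ} (hk : 0 < k) : f k = k * (k + 1) * log (1 + k⁻¹) - k := by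
  unfold f
  field_simp

theorem hasDerivAt_f {k : ℝ} (hk : 0 < k) :
    HasDerivAt f ((2 * k + 1) * log (1 + k⁻¹) - 2) k := by
  have hlog : HasDerivAt (fun x => log (1 + x⁻¹)) (-(k ^ 2)⁻¹ / (1 + k⁻¹)) k :=
    ((hasDerivAt_inv hk.ne').const_add 1).log (by positivity)
  have h := (((hasDerivAt_id k).mul ((hasDerivAt_id k).add_const 1)).mul hlog).sub (hasDerivAt_id k)
  refine (h.congr_of_eventuallyEq ?_).congr_deriv ?_
  · filter_upwards [Ioi_mem_nhds hk] with x hx using f_eq_mul_log_one_add_inv hx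
  · simp only [Pi.mul_apply, id]
    field_simp
    ring

theorem monotoneOn_f : MonotoneOn f (Ioi 0) := by
  refine monotoneOn_of_hasDerivWithinAt_nonneg (convex_Ioi 0)
    (fun k hk => (hasDerivAt_f hk).continuousAt.continuousWithinAt)
    (fun k hk => (hasDerivAt_f (interior_subset hk)).hasDerivWithinAt) fun k hk => ?_
  rw [interior_Ioi, mem_Ioi] at hk
  have := two_div_le_log_one_add_inv hk
  rw [div_le_iff₀' (by positivity)] at this
  linarith

theorem f_lt_half {k : ℝ} (hk : 0 < k) : f k < 1 / 2 := by
  have h := log_lt_sub_inv_div_two (lt_add_of_pos_right 1 (inv_pos.2 hk))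
  have key : (1 + k⁻¹ - (1 + k⁻¹)⁻¹) / 2 = (2 * k + 1) / (2 * k * (k + 1)) := by
    field_simp
    ring
  rw [key, lt_div_iff₀ (by positivity)] at h
  rw [f_eq_mul_log_one_add_inv hk]
  linarith

theorem f_one : f 1 = 2 * log 2 - 1 := by
  norm_num [f]

theorem f_bounds (k : ℝ) (hk : 1 ≤ k) :
    2 * Real.log 2 - 1 ≤ f k ∧ f k < 1/2 := by
  have hk0 : 0 < k := one_pos.trans_le hk
  exact ⟨f_one ▸ monotoneOn_f (mem_Ioi.2 one_pos) hk0 hk, f_lt_half hk0⟩
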